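/- arXiv:1902.00819 — 2 statements merged into one kernel-verified Lean document; each statement's English description precedes it below -/
import Mathlib

section
/- Consider ℓ ≥ 2 arms with nonnegative measurable mean reward functions f_1,…,f_ℓ : [0,1]^d → ℝ and f*(x) = max_{1≤i≤ℓ} f_i(x). Suppose: (i) the covariates X_1, X_2, … are i.i.d. [0,1]^d-valued random variables with E f*(X_1) > 0; (ii) A := sup_{1≤i≤ℓ} sup_{x∈[0,1]^d}(f*(x) − f_i(x)) < ∞; (iii) there is an integer m_0 and, for each arm i and each time n ≥ m_0, a random bounded function f̂_{i,n} on [0,1]^d such that sup_{1≤i≤ℓ} ‖f̂_{i,n} − f_i‖_∞ → 0 almost surely as n → ∞; (iv) for each j > m_0 the estimated best arm î_j ∈ {1,…,ℓ} satisfies f̂_{î_j, n_j}(X_j) ≥ f̂_{i, n_j}(X_j) for all 1 ≤ i ≤ ℓ, where the (random) update times n_j satisfy m_0 ≤ n_j ≤ j and n_j → ∞ as j → ∞; (v) the pulled arms I_j are such that the indicators U_j = 1{I_j ≠ î_j}, j > m_0, are independent Bernoulli random variables with success probabilities (ℓ−1)π_j, where π_j ∈ [0, 1/(ℓ−1)]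 and π_j → 0 as j → ∞. Then R_n = (Σ_{j=1}^n f_{I_j}(X_j)) / (Σ_{j=1}^n f*(X_j)) → 1 almost surely as n → ∞; that is, the allocation rule is strongly consistent. -/
open MeasureTheory ProbabilityTheory Filter Topology


private lemma aux_range_succ_eq_insert (n : ℕ) :
    Finset.range (n + 1) = insert 0 (Finset.Icc 1 n) := by
  ext x; simp only [Finset.mem_range, Finset.mem_insert, Finset.mem_Icc]; omega

private lemma aux_nat_succ_div_tendsto :
    Tendsto (fun n : ℕ => ((n : ℝ) + 1) / n) atTop (𝓝 1) := by
  have h : Tendsto (fun n : ℕ => (1 : ℝ) + (n : ℝ)⁻¹) atTop (𝓝 (1 + 0)) :=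
    tendsto_const_nhds.add tendsto_inv_atTop_nhds_zero_nat
  rw [add_zero] at h
  refine h.congr' ?_
  filter_upwards [eventually_ge_atTop 1] with n hn
  have hn0 : (n : ℝ) ≠ 0 := Nat.cast_ne_zero.2 (by omega)
  field_simp

private lemma aux_tendsto_Icc_div {Y : ℕ → ℝ} {c : ℝ}
    (h : Tendsto (fun n : ℕ => (∑ i ∈ Finset.range n, Y i) / n) atTop (𝓝 c)) :
    Tendsto (fun n : ℕ => (∑ j ∈ Finset.Icc 1 n, Y j) / n) atTop (𝓝 c) := by
  have h1 : Tendsto (fun n : ℕ => (∑ i ∈ Finset.range (n + 1), Y i) / ((n : ℝ) + 1))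
      atTop (𝓝 c) := by
    have := h.comp (tendsto_add_atTop_nat 1)
    refine this.congr fun n => ?_
    simp [Function.comp]
  have h3 : Tendsto (fun n : ℕ => Y 0 / n) atTop (𝓝 0) :=
    tendsto_const_div_atTop_nhds_zero_nat _
  have h4 := (aux_nat_succ_div_tendsto.mul h1).sub h3
  rw [one_mul, sub_zero] at h4
  refine h4.congr' ?_
  filter_upwards [eventually_ge_atTop 1] with n hn
  have hn0 : (n : ℝ) ≠ 0 := Nat.cast_ne_zero.2 (by omega)
  have hn1 : (n : ℝ) + 1 ≠ 0 := by positivity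
  rw [aux_range_succ_eq_insert, Finset.sum_insert (by simp)]
  field_simp
  ring

private lemma aux_cesaro_Icc {a : ℕ → ℝ} {l : ℝ} (h : Tendsto a atTop (𝓝 l)) :
    Tendsto (fun n : ℕ => (∑ j ∈ Finset.Icc 1 n, a j) / n) atTop (𝓝 l) := by
  apply aux_tendsto_Icc_div
  exact h.cesaro.congr fun n => (div_eq_inv_mul _ _).symm

private lemma aux_sqrt_tendsto : Tendsto Nat.sqrt atTop atTop := by
  refine tendsto_atTop_atTop.2 fun b => ⟨b * b, fun n hn => Nat.le_sqrt.2 hn⟩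

private lemma aux_slln
    {Ω : Type*} [MeasurableSpace Ω] {μ : Measure Ω} [IsProbabilityMeasure μ]
    (m₀ : ℕ) (U : ℕ → Ω → ℝ) (hUmeas : ∀ j, Measurable (U j))
    (hU0 : ∀ j ω, 0 ≤ U j ω) (hU1 : ∀ j ω, U j ω ≤ 1)
    (hindep : iIndepFun (fun j : {j : ℕ // m₀ < j} => U j) μ)
    (p : ℕ → ℝ) (hpE : ∀ j, m₀ < j → ∫ ω, U j ω ∂μ = p j)
    (hp0 : Tendsto p atTop (𝓝 0)) :
    ∀ᵐ ω ∂μ, Tendsto (fun n : ℕ => (∑ j ∈ Finset.Icc 1 n, U j ω) / n) atTop (𝓝 0) := by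
  classical
  have hmem2 : ∀ j, MemLp (U j) 2 μ := by
    intro j
    refine (memLp_top_of_bound (hUmeas j).aestronglyMeasurable 1 ?_).mono_exponent le_top
    refine Eventually.of_forall fun ω => ?_
    rw [Real.norm_eq_abs, abs_le]
    exact ⟨by linarith [hU0 j ω], hU1 j ω⟩
  have hint : ∀ j, Integrable (U j) μ := fun j => (hmem2 j).integrable one_le_two
  have hvar : ∀ j, variance (U j) μ ≤ 1 := by
    intro j
    have hsq : Integrable (fun ω => U j ω ^ 2) μ := by
      simpa using (hmem2 j).integrable_sq
    have h2 : ∫ ω, U j ω ^ 2 ∂μ ≤ ∫ _ : Ω, (1 : ℝ) ∂μ :=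
      integral_mono hsq (integrable_const 1) fun ω => by nlinarith [hU0 j ω, hU1 j ω]
    have h3 : μ[U j ^ 2] = ∫ ω, U j ω ^ 2 ∂μ := by
      apply integral_congr_ae; filter_upwards with ω; simp
    refine le_trans (variance_le_expectation_sq (hUmeas j).aestronglyMeasurable) ?_
    rw [h3]
    simpa using h2
  set Tf : ℕ → Ω → ℝ := fun N ω => ∑ j ∈ Finset.Ioc m₀ N, U j ω with hTf
  set M : ℕ → ℝ := fun N => ∑ j ∈ Finset.Ioc m₀ N, p j with hM
  have hTmem : ∀ N, MemLp (Tf N) 2 μ := fun N =>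
    memLp_finset_sum (Finset.Ioc m₀ N) fun j _ => hmem2 j
  have hTE : ∀ N, μ[Tf N] = M N := by
    intro N
    rw [hTf]
    rw [integral_finset_sum _ fun j _ => hint j]
    exact Finset.sum_congr rfl fun j hj => hpE j (Finset.mem_Ioc.1 hj).1
  have hTvar : ∀ N, variance (Tf N) μ ≤ (N : ℝ) := by
    intro N
    have heq : Tf N = ∑ j ∈ Finset.Ioc m₀ N, U j := by
      funext ω; rw [hTf]; simp [Finset.sum_apply]
    rw [heq, IndepFun.variance_sum (fun j _ => hmem2 j) ?_]
    · calc (∑ j ∈ Finset.Ioc m₀ N, variance (U j) μ)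
          ≤ ∑ _j ∈ Finset.Ioc m₀ N, (1 : ℝ) := Finset.sum_le_sum fun j _ => hvar j
        _ = ((Finset.Ioc m₀ N).card : ℝ) := by simp
        _ ≤ (N : ℝ) := by
            rw [Nat.card_Ioc]; exact_mod_cast Nat.sub_le N m₀
    · intro i hi j hj hij
      have hi' : m₀ < i := (Finset.mem_Ioc.1 (Finset.mem_coe.1 hi)).1
      have hj' : m₀ < j := (Finset.mem_Ioc.1 (Finset.mem_coe.1 hj)).1
      exact hindep.indepFun (i := ⟨i, hi'⟩) (j := ⟨j, hj'⟩)
        (fun h => hij (congrArg Subtype.val h))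
  -- Chebyshev + Borel-Cantelli on the subsequence (k+1)^2
  have key : ∀ ε : ℝ, 0 < ε → ∀ᵐ ω ∂μ, ∀ᶠ k : ℕ in atTop,
      |Tf ((k + 1) ^ 2) ω - M ((k + 1) ^ 2)| < ε * (((k + 1) ^ 2 : ℕ) : ℝ) := by
    intro ε hε
    set s : ℕ → Set Ω := fun k =>
      {ω | ε * (((k + 1) ^ 2 : ℕ) : ℝ) ≤ |Tf ((k + 1) ^ 2) ω - M ((k + 1) ^ 2)|} with hs
    have hsk : ∀ k, μ (s k) ≤ ENNReal.ofReal ((1 / ε ^ 2) * (1 / ((k : ℝ) + 1) ^ 2)) := by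
      intro k
      have hkpos : (0 : ℝ) < (((k + 1) ^ 2 : ℕ) : ℝ) := by positivity
      have hc : (0 : ℝ) < ε * (((k + 1) ^ 2 : ℕ) : ℝ) := by positivity
      have hcheb := meas_ge_le_variance_div_sq (hTmem ((k + 1) ^ 2)) hc
      rw [hTE] at hcheb
      refine le_trans hcheb (ENNReal.ofReal_le_ofReal ?_)
      rw [div_le_iff₀ (by positivity)]
      have hvN := hTvar ((k + 1) ^ 2)
      have hcast : ((((k + 1) ^ 2 : ℕ)) : ℝ) = ((k : ℝ) + 1) ^ 2 := by push_cast; ring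
      rw [hcast] at hvN ⊢
      have hk1 : (0 : ℝ) < (k : ℝ) + 1 := by positivity
      calc variance (Tf ((k + 1) ^ 2)) μ ≤ ((k : ℝ) + 1) ^ 2 := hvN
        _ = 1 / ε ^ 2 * (1 / ((k : ℝ) + 1) ^ 2) * (ε * ((k : ℝ) + 1) ^ 2) ^ 2 := by
            field_simp
    have hsummable : Summable (fun k : ℕ => (1 / ε ^ 2) * (1 / ((k : ℝ) + 1) ^ 2)) := by
      apply Summable.mul_left
      have h := (Real.summable_one_div_nat_pow (p := 2)).2 one_lt_two
      have := (summable_nat_add_iff 1).2 h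
      refine this.congr fun k => ?_
      push_cast; ring_nf
    have hsum : (∑' k, μ (s k)) ≠ ⊤ := by
      refine ne_top_of_le_ne_top ?_ (ENNReal.tsum_le_tsum hsk)
      rw [← ENNReal.ofReal_tsum_of_nonneg (fun k => by positivity) hsummable]
      exact ENNReal.ofReal_ne_top
    filter_upwards [ae_eventually_notMem hsum] with ω hω
    refine hω.mono fun k hk => ?_
    rw [hs] at hk
    exact lt_of_not_ge hk
  -- combine over ε = 1/(m+1)
  have key2 : ∀ᵐ ω ∂μ, Tendsto
      (fun k : ℕ => (Tf ((k + 1) ^ 2) ω - M ((k + 1) ^ 2)) / (((k + 1) ^ 2 : ℕ) : ℝ))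
      atTop (𝓝 0) := by
    have hall := ae_all_iff.2 fun m : ℕ => key (1 / ((m : ℝ) + 1)) (by positivity)
    filter_upwards [hall] with ω hω
    rw [NormedAddCommGroup.tendsto_nhds_zero]
    intro ε hε
    obtain ⟨m, hm⟩ := exists_nat_one_div_lt hε
    refine (hω m).mono fun k hk => ?_
    have hkpos : (0 : ℝ) < (((k + 1) ^ 2 : ℕ) : ℝ) := by positivity
    rw [Real.norm_eq_abs, abs_div, abs_of_pos hkpos, div_lt_iff₀ hkpos]
    calc |Tf ((k + 1) ^ 2) ω - M ((k + 1) ^ 2)|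
        < 1 / ((m : ℝ) + 1) * (((k + 1) ^ 2 : ℕ) : ℝ) := hk
      _ ≤ ε * (((k + 1) ^ 2 : ℕ) : ℝ) := by
          apply mul_le_mul_of_nonneg_right (le_of_lt hm) (le_of_lt hkpos)
  -- Cesàro for M
  have hMc : Tendsto (fun N : ℕ => M N / N) atTop (𝓝 0) := by
    set p' : ℕ → ℝ := fun j => if m₀ < j then p j else 0 with hp'
    have hp'0 : Tendsto p' atTop (𝓝 0) := by
      refine hp0.congr' ?_
      filter_upwards [eventually_gt_atTop m₀] with j hj
      rw [hp']; simp [hj]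
    have hMeq : ∀ N, M N = ∑ j ∈ Finset.Icc 1 N, p' j := by
      intro N
      have hfil : (Finset.Icc 1 N).filter (fun j => m₀ < j) = Finset.Ioc m₀ N := by
        ext j
        simp only [Finset.mem_filter, Finset.mem_Icc, Finset.mem_Ioc]
        omega
      show (∑ j ∈ Finset.Ioc m₀ N, p j) = _
      rw [← hfil, Finset.sum_filter]
    exact (aux_cesaro_Icc hp'0).congr fun N => by rw [hMeq N]
  filter_upwards [key2] with ω hω
  have hsqtop : Tendsto (fun k : ℕ => (k + 1) ^ 2) atTop atTop :=
    tendsto_atTop_mono (fun k => by simp only [id_eq]; nlinarith) tendsto_id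
  have hMk : Tendsto (fun k : ℕ => M ((k + 1) ^ 2) / (((k + 1) ^ 2 : ℕ) : ℝ)) atTop (𝓝 0) :=
    hMc.comp hsqtop
  have hTk : Tendsto (fun k : ℕ => Tf ((k + 1) ^ 2) ω / (((k + 1) ^ 2 : ℕ) : ℝ))
      atTop (𝓝 0) := by
    have h := hω.add hMk
    rw [add_zero] at h
    refine h.congr fun k => ?_
    rw [← add_div, sub_add_cancel]
  have hrat : Tendsto (fun k : ℕ => (((k + 1) ^ 2 : ℕ) : ℝ) / ((k : ℝ)) ^ 2) atTop (𝓝 1) := by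
    have h := aux_nat_succ_div_tendsto.pow 2
    rw [one_pow] at h
    refine h.congr fun k => ?_
    push_cast
    rw [div_pow]
  have hg : Tendsto (fun k : ℕ => Tf ((k + 1) ^ 2) ω / ((k : ℝ)) ^ 2) atTop (𝓝 0) := by
    have h := hrat.mul hTk
    rw [one_mul] at h
    refine h.congr' ?_
    filter_upwards [eventually_ge_atTop 1] with k hk
    have hk0 : ((k : ℝ)) ≠ 0 := Nat.cast_ne_zero.2 (by omega)
    have hk1 : ((((k + 1) ^ 2 : ℕ)) : ℝ) ≠ 0 := by positivity
    field_simp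
  set C : ℝ := ∑ j ∈ Finset.Ioc 0 m₀, U j ω with hC
  apply squeeze_zero'
    (g := fun n : ℕ => C / n + Tf ((Nat.sqrt n + 1) ^ 2) ω / ((Nat.sqrt n : ℝ)) ^ 2)
  · exact Eventually.of_forall fun n =>
      div_nonneg (Finset.sum_nonneg fun j _ => hU0 j ω) (Nat.cast_nonneg n)
  · filter_upwards [eventually_ge_atTop (m₀ + 1)] with n hn
    have hn1 : 1 ≤ n := le_trans (Nat.le_add_left 1 m₀) hn
    have hsplit : (∑ j ∈ Finset.Icc 1 n, U j ω) = C + Tf n ω := by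
      have hIcc : Finset.Icc 1 n = Finset.Ioc 0 n := by
        ext x; simp only [Finset.mem_Icc, Finset.mem_Ioc]; omega
      rw [hIcc, hC, hTf]
      exact (Finset.sum_Ioc_consecutive _ (Nat.zero_le m₀) (by omega)).symm
    have hs1 : 1 ≤ Nat.sqrt n := Nat.le_sqrt.2 (by omega)
    have hmono : Tf n ω ≤ Tf ((Nat.sqrt n + 1) ^ 2) ω := by
      rw [hTf]
      apply Finset.sum_le_sum_of_subset_of_nonneg
      · apply Finset.Ioc_subset_Ioc le_rfl
        exact le_of_lt (by simpa [Nat.succ_eq_add_one] using Nat.lt_succ_sqrt' n)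
      · intro j _ _; exact hU0 j ω
    have hTnn : 0 ≤ Tf ((Nat.sqrt n + 1) ^ 2) ω := Finset.sum_nonneg fun j _ => hU0 j ω
    have hq : ((Nat.sqrt n : ℝ)) ^ 2 ≤ (n : ℝ) := by exact_mod_cast Nat.sqrt_le' n
    have hspos : (0 : ℝ) < (Nat.sqrt n : ℝ) := by exact_mod_cast hs1
    have hqpos : (0 : ℝ) < ((Nat.sqrt n : ℝ)) ^ 2 := by positivity
    rw [hsplit, add_div]
    refine add_le_add le_rfl ?_
    exact div_le_div₀ hTnn hmono hqpos hq
  · have h := (tendsto_const_div_atTop_nhds_zero_nat C).add (hg.comp aux_sqrt_tendsto)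
    rw [add_zero] at h
    exact h

/-- Strong consistency of the randomized (ε-greedy) allocation rule for multi-armed
bandits with covariates and delayed rewards.  Under: (i) i.i.d. covariates in the unit
cube with `E f*(X 1) > 0`; (ii) a uniform bound `A` on `f* - f i` over the cube;
(iii) almost-sure uniform (sup-norm over the cube) convergence of the estimators
`fhat i n` to `f i`; (iv) greedy arms `ihat j` maximizing the estimates built at the
(random) update times `nupd j → ∞`; and (v) independent exploration indicators
`1{I j ≠ ihat j}` with probabilities `(ℓ-1) π j`, `π j → 0`; the ratio of the earned
cumulative mean reward to the optimal cumulative mean reward converges to `1` a.s. -/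
theorem delayed_bandit_strong_consistency
    {Ω : Type*} [MeasurableSpace Ω] {μ : Measure Ω} [IsProbabilityMeasure μ]
    (d ℓ : ℕ) (hℓ : 2 ≤ ℓ)
    (f : Fin ℓ → (Fin d → ℝ) → ℝ)
    (hfmeas : ∀ i, Measurable (f i))
    (hfnonneg : ∀ i, ∀ x ∈ Set.Icc (0 : Fin d → ℝ) 1, 0 ≤ f i x)
    (fstar : (Fin d → ℝ) → ℝ) (hfstar : ∀ x, fstar x = ⨆ i, f i x)
    -- (i) the covariates are i.i.d., valued in the unit cube, with `E f*(X 1) > 0`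
    (X : ℕ → Ω → (Fin d → ℝ)) (hXmeas : ∀ j, Measurable (X j))
    (hXcube : ∀ j ω, X j ω ∈ Set.Icc (0 : Fin d → ℝ) 1)
    (hXindep : iIndepFun X μ)
    (hXident : ∀ j, IdentDistrib (X j) (X 1) μ μ)
    (hEpos : 0 < ∫ ω, fstar (X 1 ω) ∂μ)
    -- (ii) a uniform bound on the regret of each arm
    (A : ℝ) (hA : ∀ i, ∀ x ∈ Set.Icc (0 : Fin d → ℝ) 1, fstar x - f i x ≤ A)
    -- (iii) estimators, bounded and uniformly strongly consistent
    (m₀ : ℕ) (fhat : Fin ℓ → ℕ → Ω → (Fin d → ℝ) → ℝ)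
    (hfhatBdd : ∀ i n ω, m₀ ≤ n →
      ∃ C, ∀ x ∈ Set.Icc (0 : Fin d → ℝ) 1, |fhat i n ω x| ≤ C)
    (hconv : ∀ᵐ ω ∂μ, ∀ ε > (0 : ℝ), ∀ᶠ n in atTop, ∀ i,
      ∀ x ∈ Set.Icc (0 : Fin d → ℝ) 1, |fhat i n ω x - f i x| ≤ ε)
    -- (iv) the estimated best arm, built from estimates at update times `nupd j ≤ j`
    (ihat : ℕ → Ω → Fin ℓ) (nupd : ℕ → Ω → ℕ)
    (hnupd : ∀ j ω, m₀ < j → m₀ ≤ nupd j ω ∧ nupd j ω ≤ j)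
    (hnupdTop : ∀ ω, Tendsto (fun j => nupd j ω) atTop atTop)
    (hargmax : ∀ j ω, m₀ < j → ∀ i,
      fhat i (nupd j ω) ω (X j ω) ≤ fhat (ihat j ω) (nupd j ω) ω (X j ω))
    -- (v) ε-greedy randomization with exploration probabilities `(ℓ-1) π j → 0`
    (I : ℕ → Ω → Fin ℓ) (π : ℕ → ℝ)
    (hπ : ∀ j, π j ∈ Set.Icc (0 : ℝ) (1 / ((ℓ : ℝ) - 1)))
    (hπ0 : Tendsto π atTop (nhds 0))
    (hUmeas : ∀ j, Measurable (fun ω => if I j ω ≠ ihat j ω then (1 : ℝ) else 0))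
    (hUindep : iIndepFun
      (fun j : {j : ℕ // m₀ < j} => fun ω => if I j ω ≠ ihat j ω then (1 : ℝ) else 0) μ)
    (hUbern : ∀ j : ℕ, m₀ < j →
      μ {ω | I j ω ≠ ihat j ω} = ENNReal.ofReal (((ℓ : ℝ) - 1) * π j)) :
    ∀ᵐ ω ∂μ, Tendsto
      (fun n : ℕ => (∑ j ∈ Finset.Icc 1 n, f (I j ω) (X j ω)) /
        (∑ j ∈ Finset.Icc 1 n, fstar (X j ω)))
      atTop (nhds 1) := by
  classical
  haveI : Nonempty (Fin ℓ) := ⟨⟨0, by omega⟩⟩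
  have hfstarMeas : Measurable fstar := by
    have h : fstar = fun x => ⨆ i, f i x := funext hfstar
    rw [h]; exact Measurable.iSup hfmeas
  -- strong law of large numbers for the optimal rewards
  set c : ℝ := ∫ ω, fstar (X 1 ω) ∂μ with hcdef
  have hint1 : Integrable (fun ω => fstar (X 1 ω)) μ := by
    by_contra h
    rw [hcdef, integral_undef h] at hEpos
    exact lt_irrefl 0 hEpos
  have hY01 : IdentDistrib (fun ω => fstar (X 0 ω)) (fun ω => fstar (X 1 ω)) μ μ :=
    (hXident 0).comp hfstarMeas
  have hint0 : Integrable (fun ω => fstar (X 0 ω)) μ := hY01.integrable_iff.2 hint1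
  have hSL := strong_law_ae_real (fun j ω => fstar (X j ω)) hint0
    (fun i j hij => (hXindep.indepFun hij).comp hfstarMeas hfstarMeas)
    (fun i => ((hXident i).trans (hXident 0).symm).comp hfstarMeas)
  have hEY : (μ[fun ω => fstar (X 0 ω)]) = c := hY01.integral_eq
  have hDen : ∀ᵐ ω ∂μ, Tendsto
      (fun n : ℕ => (∑ j ∈ Finset.Icc 1 n, fstar (X j ω)) / n) atTop (𝓝 c) := by
    filter_upwards [hSL] with ω h
    rw [hEY] at h
    exact aux_tendsto_Icc_div h
  -- strong law for the exploration indicators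
  set U : ℕ → Ω → ℝ := fun j ω => if I j ω ≠ ihat j ω then (1 : ℝ) else 0 with hUdef
  set p : ℕ → ℝ := fun j => ((ℓ : ℝ) - 1) * π j with hpdef
  have hℓ1 : (0 : ℝ) < (ℓ : ℝ) - 1 := by
    have h2 : (2 : ℝ) ≤ (ℓ : ℝ) := by exact_mod_cast hℓ
    linarith
  have hpnn : ∀ j, 0 ≤ p j := fun j => mul_nonneg (le_of_lt hℓ1) (hπ j).1
  have hU0 : ∀ j ω, 0 ≤ U j ω := by
    intro j ω; rw [hUdef]; dsimp only; split <;> norm_num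
  have hU1 : ∀ j ω, U j ω ≤ 1 := by
    intro j ω; rw [hUdef]; dsimp only; split <;> norm_num
  have hpE : ∀ j, m₀ < j → ∫ ω, U j ω ∂μ = p j := by
    intro j hj
    have hset : MeasurableSet {ω | I j ω ≠ ihat j ω} := by
      have h : {ω | I j ω ≠ ihat j ω}
          = (fun ω => if I j ω ≠ ihat j ω then (1 : ℝ) else 0) ⁻¹' {1} := by
        ext ω; by_cases h : I j ω ≠ ihat j ω <;> simp [h]
      rw [h]; exact hUmeas j (measurableSet_singleton 1)
    have hind : (fun ω => U j ω)
        = Set.indicator {ω | I j ω ≠ ihat j ω} (fun _ => (1 : ℝ)) := by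
      funext ω
      rw [Set.indicator_apply, hUdef]
      rfl
    rw [hind, integral_indicator_const (1 : ℝ) hset, measureReal_def, hUbern j hj,
      ENNReal.toReal_ofReal (hpnn j), smul_eq_mul, mul_one]
  have hp0 : Tendsto p atTop (𝓝 0) := by
    have h := hπ0.const_mul ((ℓ : ℝ) - 1)
    rw [mul_zero] at h
    exact h
  have hUslln := aux_slln m₀ U hUmeas hU0 hU1 hUindep p hpE hp0
  -- combine everything pointwise
  filter_upwards [hconv, hDen, hUslln] with ω hconvω hDenω hUω
  have hbdd : ∀ z, BddAbove (Set.range fun i => f i z) :=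
    fun z => Set.Finite.bddAbove (Set.finite_range _)
  set r : ℕ → ℝ := fun j => fstar (X j ω) - f (I j ω) (X j ω) with hrdef
  have hr0 : ∀ j, 0 ≤ r j := by
    intro j
    simp only [hrdef, sub_nonneg, hfstar]
    exact le_ciSup (hbdd _) (I j ω)
  have hrA : ∀ j, r j ≤ A := fun j => hA _ _ (hXcube j ω)
  set e : ℕ → ℝ := fun j => if I j ω = ihat j ω then r j else 0 with hedef
  have heten : Tendsto e atTop (𝓝 0) := by
    rw [NormedAddCommGroup.tendsto_nhds_zero]
    intro ε hε
    obtain ⟨N, hN⟩ := eventually_atTop.1 (hconvω (ε / 4) (by positivity))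
    filter_upwards [(hnupdTop ω).eventually_ge_atTop N, eventually_gt_atTop m₀]
      with j hjN hjm
    by_cases hIj : I j ω = ihat j ω
    · have heq : e j = r j := by simp only [hedef, if_pos hIj]
      rw [heq, Real.norm_eq_abs, abs_of_nonneg (hr0 j)]
      obtain ⟨istar, histar⟩ := exists_eq_ciSup_of_finite (f := fun i => f i (X j ω))
      have h1 := hN _ hjN istar _ (hXcube j ω)
      have h2 := hN _ hjN (ihat j ω) _ (hXcube j ω)
      have h3 := hargmax j ω hjm istar
      have hrj : r j = fstar (X j ω) - f (ihat j ω) (X j ω) := by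
        simp only [hrdef, hIj]
      rw [hrj, hfstar, ← histar]
      rw [abs_le] at h1 h2
      linarith [h1.1, h1.2, h2.1, h2.2]
    · have heq : e j = 0 := by simp only [hedef, if_neg hIj]
      rw [heq, norm_zero]; exact hε
  have hre : ∀ j, r j ≤ A * U j ω + e j := by
    intro j
    by_cases hIj : I j ω = ihat j ω
    · have hu : U j ω = 0 := by simp only [hUdef]; simp [hIj]
      have he' : e j = r j := by simp only [hedef, if_pos hIj]
      rw [hu, he', mul_zero, zero_add]
    · have hu : U j ω = 1 := by simp only [hUdef]; simp [hIj]
      have he' : e j = 0 := by simp only [hedef, if_neg hIj]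
      rw [hu, he', mul_one, add_zero]
      exact hrA j
  have hA0 : 0 ≤ A := le_trans (hr0 0) (hrA 0)
  have hRegret : Tendsto (fun n : ℕ => (∑ j ∈ Finset.Icc 1 n, r j) / n) atTop (𝓝 0) := by
    apply squeeze_zero' (g := fun n : ℕ =>
      A * ((∑ j ∈ Finset.Icc 1 n, U j ω) / n) + (∑ j ∈ Finset.Icc 1 n, e j) / n)
    · exact Eventually.of_forall fun n =>
        div_nonneg (Finset.sum_nonneg fun j _ => hr0 j) (Nat.cast_nonneg n)
    · refine Eventually.of_forall fun n => ?_
      have hsum : (∑ j ∈ Finset.Icc 1 n, r j)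
          ≤ ∑ j ∈ Finset.Icc 1 n, (A * U j ω + e j) :=
        Finset.sum_le_sum fun j _ => hre j
      have hdist : (∑ j ∈ Finset.Icc 1 n, (A * U j ω + e j))
          = A * (∑ j ∈ Finset.Icc 1 n, U j ω) + ∑ j ∈ Finset.Icc 1 n, e j := by
        rw [Finset.sum_add_distrib, Finset.mul_sum]
      calc (∑ j ∈ Finset.Icc 1 n, r j) / n
          ≤ (∑ j ∈ Finset.Icc 1 n, (A * U j ω + e j)) / n := by
            rw [div_eq_mul_inv, div_eq_mul_inv]
            exact mul_le_mul_of_nonneg_right hsum (by positivity)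
        _ = A * ((∑ j ∈ Finset.Icc 1 n, U j ω) / n)
            + (∑ j ∈ Finset.Icc 1 n, e j) / n := by
            rw [hdist, add_div, mul_div_assoc]
    · have h := (hUω.const_mul A).add (aux_cesaro_Icc heten)
      rw [mul_zero, add_zero] at h
      exact h
  have hNum : Tendsto
      (fun n : ℕ => (∑ j ∈ Finset.Icc 1 n, f (I j ω) (X j ω)) / n) atTop (𝓝 c) := by
    have h := hDenω.sub hRegret
    rw [sub_zero] at h
    refine h.congr fun n => ?_
    rw [← sub_div]
    congr 1
    rw [← Finset.sum_sub_distrib]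
    refine Finset.sum_congr rfl fun j _ => ?_
    simp only [hrdef]
    ring
  have hcne : c ≠ 0 := ne_of_gt hEpos
  have hfin := hNum.div hDenω hcne
  rw [div_self hcne] at hfin
  refine Tendsto.congr' ?_ hfin
  filter_upwards [eventually_ge_atTop 1] with n hn
  have hn0 : (n : ℝ) ≠ 0 := Nat.cast_ne_zero.2 (by omega)
  rcases eq_or_ne (∑ j ∈ Finset.Icc 1 n, fstar (X j ω)) 0 with hb | hb
  · simp only [Pi.div_apply]
    rw [hb, zero_div, div_zero, div_zero]
  · simp only [Pi.div_apply]
    field_simp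
end

section
/- Let (F_j)_{j=0}^n be a filtration on a probability space and let W_1,…,W_n be {0,1}-valued random variables such that W_j is F_j-measurable and P(W_j = 1 | F_{j−1}) ≥ β_j almost surely, where β_1,…,β_n ∈ [0,1]. Then P(Σ_{j=1}^n W_j ≤ (Σ_{j=1}^n β_j)/2) ≤ exp(−(3/28)·Σ_{j=1}^n β_j). -/
open MeasureTheory ProbabilityTheory Filter

/-- Extended Bernstein inequality for Bernoulli trials that are not necessarily
independent: if each `{0,1}`-valued `W j` is `F j`-measurable and its conditional
success probability given `F (j-1)` is at least `β j`, then the probability that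
`∑ W j` is at most half of `∑ β j` is at most `exp (-(3/28) ∑ β j)`. -/
theorem extended_bernstein_bernoulli
    {Ω : Type*} [m0 : MeasurableSpace Ω] {μ : Measure Ω} [IsProbabilityMeasure μ]
    (n : ℕ) (F : Filtration ℕ m0)
    (W : ℕ → Ω → ℝ) (β : ℕ → ℝ)
    (hW01 : ∀ j ω, W j ω = 0 ∨ W j ω = 1)
    (hWadapted : ∀ j, Measurable[F j] (W j))
    (hβ : ∀ j, β j ∈ Set.Icc (0 : ℝ) 1)
    (hWcond : ∀ j ∈ Finset.Icc 1 n, (fun _ => β j) ≤ᵐ[μ] μ[W j | F (j - 1)]) :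
    μ {ω | ∑ j ∈ Finset.Icc 1 n, W j ω ≤ (∑ j ∈ Finset.Icc 1 n, β j) / 2} ≤
      ENNReal.ofReal (Real.exp (-(3 / 28) * ∑ j ∈ Finset.Icc 1 n, β j)) := by
  classical
  set B := ∑ j ∈ Finset.Icc 1 n, β j with hBdef
  have hW0 : ∀ j ω, 0 ≤ W j ω := fun j ω => by
    rcases hW01 j ω with h | h <;> rw [h] <;> norm_num
  have hW1 : ∀ j ω, W j ω ≤ 1 := fun j ω => by
    rcases hW01 j ω with h | h <;> rw [h] <;> norm_num
  have hWm : ∀ j, Measurable (W j) := fun j => (hWadapted j).mono (F.le j) le_rfl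
  have hWint : ∀ j, Integrable (W j) μ := fun j =>
    (integrable_const (1 : ℝ)).mono' (hWm j).aestronglyMeasurable
      (ae_of_all _ fun ω => by
        rw [Real.norm_eq_abs, abs_of_nonneg (hW0 j ω)]; exact hW1 j ω)
  have hf0 : ∀ j ω, 0 ≤ 1 - W j ω / 2 := fun j ω => by nlinarith [hW1 j ω]
  have hf1 : ∀ j ω, 1 - W j ω / 2 ≤ 1 := fun j ω => by nlinarith [hW0 j ω]
  set P : ℕ → Ω → ℝ := fun k ω => ∏ j ∈ Finset.Icc 1 k, (1 - W j ω / 2) with hPdef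
  have hP0 : ∀ k ω, 0 ≤ P k ω := fun k ω => Finset.prod_nonneg fun j _ => hf0 j ω
  have hP1 : ∀ k ω, P k ω ≤ 1 := fun k ω =>
    Finset.prod_le_one (fun j _ => hf0 j ω) fun j _ => hf1 j ω
  have hPm : ∀ k, Measurable[F k] (P k) := fun k =>
    Finset.measurable_prod _ fun j hj =>
      measurable_const.sub
        (((hWadapted j).mono (F.mono (Finset.mem_Icc.mp hj).2) le_rfl).div_const 2)
  have hPm0 : ∀ k, Measurable (P k) := fun k => (hPm k).mono (F.le k) le_rfl
  have hPint : ∀ k, Integrable (P k) μ := fun k =>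
    (integrable_const (1 : ℝ)).mono' (hPm0 k).aestronglyMeasurable
      (ae_of_all _ fun ω => by
        rw [Real.norm_eq_abs, abs_of_nonneg (hP0 k ω)]; exact hP1 k ω)
  have hβ0 : ∀ j, 0 ≤ 1 - β j / 2 := fun j => by
    have := (hβ j).2; nlinarith
  -- the key supermartingale estimate
  have key : ∀ k, k ≤ n → ∫ ω, P k ω ∂μ ≤ ∏ j ∈ Finset.Icc 1 k, (1 - β j / 2) := by
    intro k
    induction k with
    | zero => intro _; simp [hPdef]
    | succ k ih =>
      intro hkn
      have hk : k ≤ n := Nat.le_of_succ_le hkn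
      have hins : Finset.Icc 1 (k + 1) = insert (k + 1) (Finset.Icc 1 k) :=
        (Finset.insert_Icc_right_eq_Icc_add_one (by omega)).symm
      have hnotmem : (k + 1) ∉ Finset.Icc 1 k := by simp
      have hsplit : P (k + 1) = fun ω => P k ω * (1 - W (k + 1) ω / 2) := by
        funext ω
        simp only [hPdef, hins, Finset.prod_insert hnotmem]
        ring
      set f : Ω → ℝ := fun ω => 1 - W (k + 1) ω / 2 with hfdef
      have hfint : Integrable f μ :=
        (integrable_const (1 : ℝ)).sub ((hWint (k + 1)).div_const 2)
      have hPfint : Integrable (fun ω => P k ω * f ω) μ :=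
        hfint.bdd_mul (hPm0 k).aestronglyMeasurable
          (c := 1) (ae_of_all _ fun ω => by
            rw [Real.norm_eq_abs, abs_of_nonneg (hP0 k ω)]; exact hP1 k ω)
      -- pull-out property
      have hpull : μ[fun ω => P k ω * f ω | F k] =ᵐ[μ] fun ω => P k ω * (μ[f | F k]) ω := by
        have := condExp_mul_of_stronglyMeasurable_left (μ := μ) (hPm k).stronglyMeasurable
          (by exact hPfint) hfint
        filter_upwards [this] with ω hω using hω
      -- conditional expectation of f
      have hcondf : μ[f | F k] =ᵐ[μ] fun ω => 1 - (μ[W (k + 1) | F k]) ω / 2 := by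
        have h1 : f = (fun _ => (1 : ℝ)) - (2⁻¹ : ℝ) • W (k + 1) := by
          funext ω; simp [hfdef, smul_eq_mul]; ring
        rw [h1]
        refine (condExp_sub (integrable_const (1 : ℝ)) ((hWint (k + 1)).smul (2⁻¹ : ℝ)) _).trans ?_
        have hs := condExp_smul (μ := μ) (m := F k) (2⁻¹ : ℝ) (W (k + 1))
        have hc : μ[(fun _ => (1 : ℝ)) | F k] = fun _ => (1 : ℝ) := condExp_const (F.le k) 1
        filter_upwards [hs] with ω hω
        simp only [Pi.sub_apply, hc, Pi.smul_apply, smul_eq_mul] at *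
        rw [hω]; ring
      -- the conditional lower bound
      have hcond : (fun _ => β (k + 1)) ≤ᵐ[μ] μ[W (k + 1) | F k] := by
        have := hWcond (k + 1) (Finset.mem_Icc.mpr ⟨by omega, hkn⟩)
        simpa using this
      -- a.e. bound for the product with condexp
      have hae : (fun ω => P k ω * (μ[f | F k]) ω) ≤ᵐ[μ]
          fun ω => P k ω * (1 - β (k + 1) / 2) := by
        filter_upwards [hcondf, hcond] with ω h1 h2
        have : (μ[f | F k]) ω ≤ 1 - β (k + 1) / 2 := by rw [h1]; linarith
        exact mul_le_mul_of_nonneg_left this (hP0 k ω)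
      calc ∫ ω, P (k + 1) ω ∂μ
          = ∫ ω, (μ[fun ω => P k ω * f ω | F k]) ω ∂μ := by
            rw [integral_condExp (F.le k), hsplit]
        _ = ∫ ω, P k ω * (μ[f | F k]) ω ∂μ := integral_congr_ae hpull
        _ ≤ ∫ ω, P k ω * (1 - β (k + 1) / 2) ∂μ := by
            refine integral_mono_ae ?_ ((hPint k).mul_const _) hae
            exact integrable_condExp.bdd_mul (hPm0 k).aestronglyMeasurable
              (c := 1) (ae_of_all _ fun ω => by
                rw [Real.norm_eq_abs, abs_of_nonneg (hP0 k ω)]; exact hP1 k ω)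
        _ = (∫ ω, P k ω ∂μ) * (1 - β (k + 1) / 2) := by rw [integral_mul_const]
        _ ≤ (∏ j ∈ Finset.Icc 1 k, (1 - β j / 2)) * (1 - β (k + 1) / 2) :=
            mul_le_mul_of_nonneg_right (ih hk) (hβ0 (k + 1))
        _ = ∏ j ∈ Finset.Icc 1 (k + 1), (1 - β j / 2) := by
            rw [hins, Finset.prod_insert hnotmem]; ring
  -- product bound by exponential
  have hprod_exp : ∏ j ∈ Finset.Icc 1 n, (1 - β j / 2) ≤ Real.exp (-(B / 2)) := by
    have : ∏ j ∈ Finset.Icc 1 n, (1 - β j / 2) ≤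
        ∏ j ∈ Finset.Icc 1 n, Real.exp (-(β j / 2)) := by
      refine Finset.prod_le_prod (fun j _ => hβ0 j) fun j _ => ?_
      have := Real.add_one_le_exp (-(β j / 2))
      linarith
    refine this.trans (le_of_eq ?_)
    rw [← Real.exp_sum]
    congr 1
    rw [Finset.sum_neg_distrib, hBdef, Finset.sum_div]
  have hB0 : 0 ≤ B := Finset.sum_nonneg fun j _ => (hβ j).1
  -- P n ω = exp (- S ω * log 2)
  have hPexp : ∀ ω, P n ω = Real.exp (-(∑ j ∈ Finset.Icc 1 n, W j ω) * Real.log 2) := by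
    intro ω
    have hsum : -(∑ j ∈ Finset.Icc 1 n, W j ω) * Real.log 2
        = ∑ j ∈ Finset.Icc 1 n, -(W j ω * Real.log 2) := by
      rw [Finset.sum_neg_distrib, ← Finset.sum_mul]; ring
    rw [hsum, Real.exp_sum]
    simp only [hPdef]
    refine Finset.prod_congr rfl fun j _ => ?_
    rcases hW01 j ω with h | h <;> rw [h]
    · simp
    · rw [one_mul, Real.exp_neg, Real.exp_log two_pos]; norm_num
  set ε : ℝ := Real.exp (-(B / 2) * Real.log 2) with hεdef
  have hε : 0 < ε := Real.exp_pos _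
  -- event inclusion
  have hsub : {ω | ∑ j ∈ Finset.Icc 1 n, W j ω ≤ B / 2} ⊆ {ω | ε ≤ P n ω} := by
    intro ω hω
    simp only [Set.mem_setOf_eq] at hω ⊢
    rw [hPexp ω, hεdef]
    apply Real.exp_le_exp.mpr
    have hlog : (0 : ℝ) ≤ Real.log 2 := Real.log_nonneg one_le_two
    nlinarith
  -- Markov
  have hmarkov := mul_meas_ge_le_integral_of_nonneg
    (ae_of_all μ fun ω => hP0 n ω) (hPint n) ε
  have hfin : μ {x | ε ≤ P n x} ≠ ⊤ := measure_ne_top μ _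
  have hfin2 : μ {ω | ∑ j ∈ Finset.Icc 1 n, W j ω ≤ B / 2} ≠ ⊤ := measure_ne_top μ _
  have htoReal : (μ {ω | ∑ j ∈ Finset.Icc 1 n, W j ω ≤ B / 2}).toReal ≤
      Real.exp (-(3 / 28) * B) := by
    have h1 : (μ {ω | ∑ j ∈ Finset.Icc 1 n, W j ω ≤ B / 2}).toReal ≤
        (μ {x | ε ≤ P n x}).toReal :=
      ENNReal.toReal_mono hfin (measure_mono hsub)
    have h2 : ε * (μ {x | ε ≤ P n x}).toReal ≤ Real.exp (-(B / 2)) :=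
      hmarkov.trans ((key n le_rfl).trans hprod_exp)
    have h3 : (μ {x | ε ≤ P n x}).toReal ≤ Real.exp (-(B / 2)) / ε :=
      (le_div_iff₀ hε).mpr (by linarith [h2, mul_comm ε (μ {x | ε ≤ P n x}).toReal])
    refine h1.trans (h3.trans ?_)
    rw [hεdef, div_eq_mul_inv, ← Real.exp_neg, ← Real.exp_add]
    apply Real.exp_le_exp.mpr
    have hlog2 : Real.log 2 < 0.6931471808 := Real.log_two_lt_d9
    nlinarith
  calc μ {ω | ∑ j ∈ Finset.Icc 1 n, W j ω ≤ B / 2}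
      = ENNReal.ofReal (μ {ω | ∑ j ∈ Finset.Icc 1 n, W j ω ≤ B / 2}).toReal :=
        (ENNReal.ofReal_toReal hfin2).symm
    _ ≤ ENNReal.ofReal (Real.exp (-(3 / 28) * B)) := ENNReal.ofReal_le_ofReal htoReal
end
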